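/- If a commutative (nonassociative) algebra A over a field of characteristic zero satisfies the identity t_3(a_1,a_2,a_3) = (a_1a_2)a_3 + (a_1a_3)a_2 + a_1(a_2a_3) = 0, then it also satisfies t_4 = 0, and hence t_d = 0 for all d ≥ 3. -/

import Mathlib

/-- `tb f fuel l`: fuel-based recursion computing the sum of all distinct multilinear
monomials on the entries of `l` for a commutative binary operation `f`:
`tₙ = Σ_{I⊔J={1,…,n}, 1∈I, I,J≠∅} t_{|I|}(a_I)·t_{|J|}(a_J)`. -/
def tb {A : Type*} [AddCommMonoid A] (f : A → A → A) : ℕ → List A → A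
  | 0, _ => 0
  | _ + 1, [a] => a
  | fuel + 1, l =>
      ∑ I ∈ (Finset.range l.length).powerset.filter
          (fun I => 0 ∈ I ∧ I ≠ Finset.range l.length),
        f (tb f fuel ((I.sort (· ≤ ·)).map (fun i => l.getD i 0)))
          (tb f fuel ((((Finset.range l.length) \ I).sort (· ≤ ·)).map (fun i => l.getD i 0)))

/-- `Tb f [a₁,…,aₙ] = tₙ(a₁,…,aₙ)`, the sum of all distinct multilinear degree-`n`
monomials for the commutative product `f`. -/
def Tb {A : Type*} [AddCommMonoid A] (f : A → A → A) (l : List A) : A :=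
  tb f l.length l

/-!
Expanding `tₙ` along the block containing the first letter writes it as the sum, over the
splittings of the letters into two nonempty blocks, of the products `t_I · t_J`. For `n ≥ 5`
one of the two blocks has at least three letters, so `t₃ = t₄ = 0` forces `tₙ = 0` by induction.
In the expansion of `t₄(a,b,c,d)` every term but the matching sum
`P = (ab)(cd) + (ac)(bd) + (ad)(bc)` contains a factor `t₃`, and `2P` is a signed sum of ten
instances of `t₃` (multiplied by a letter where needed), so `P = 0` once `2` is invertible.
-/

open Finset

section Expansion

variable {A : Type*} [AddCommMonoid A] (f : A → A → A)

def entriesAt (l : List A) (I : Finset ℕ) : List A :=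
  (I.sort (· ≤ ·)).map (fun i => l.getD i 0)

def indexSplits (n : ℕ) : Finset (Finset ℕ × Finset ℕ) :=
  ((range n).powerset.filter (fun I => 0 ∈ I ∧ I ≠ range n)).image (fun I => (I, range n \ I))

theorem length_entriesAt (l : List A) (I : Finset ℕ) : (entriesAt l I).length = I.card := by
  simp [entriesAt]

theorem entriesAt_singleton (l : List A) (i : ℕ) : entriesAt l {i} = [l.getD i 0] := by
  simp [entriesAt]

theorem entriesAt_insert (l : List A) {i : ℕ} {s : Finset ℕ} (hi : ∀ j ∈ s, i ≤ j)
    (hs : i ∉ s) : entriesAt l (insert i s) = l.getD i 0 :: entriesAt l s := by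
  simp [entriesAt, sort_insert _ hi hs]

theorem cards_of_mem_indexSplits {n : ℕ} {p : Finset ℕ × Finset ℕ} (hp : p ∈ indexSplits n) :
    0 < p.1.card ∧ 0 < p.2.card ∧ p.1.card + p.2.card = n := by
  simp only [indexSplits, mem_image, mem_filter, mem_powerset] at hp
  obtain ⟨I, ⟨hI, h0, hne⟩, rfl⟩ := hp
  refine ⟨card_pos.2 ⟨0, h0⟩, card_pos.2 (sdiff_nonempty.2 fun h => hne (hI.antisymm h)), ?_⟩
  simpa [add_comm] using card_sdiff_add_card_eq_card hI

theorem indexSplits_two : indexSplits 2 = {({0}, {1})} := by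
  decide

theorem indexSplits_three :
    indexSplits 3 = {({0}, {1, 2}), ({0, 1}, {2}), ({0, 2}, {1})} := by
  decide

theorem indexSplits_four : indexSplits 4 =
    {({0}, {1, 2, 3}), ({0, 1}, {2, 3}), ({0, 2}, {1, 3}), ({0, 3}, {1, 2}),
      ({0, 1, 2}, {3}), ({0, 1, 3}, {2}), ({0, 2, 3}, {1})} := by
  decide

theorem tb_succ_singleton (n : ℕ) (a : A) : tb f (n + 1) [a] = a :=
  rfl

theorem tb_succ (n : ℕ) {l : List A} (hl : 2 ≤ l.length) :
    tb f (n + 1) l =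
      ∑ p ∈ indexSplits l.length, f (tb f n (entriesAt l p.1)) (tb f n (entriesAt l p.2)) := by
  obtain ⟨x, y, t, rfl⟩ : ∃ x y t, l = x :: y :: t := by
    match l, hl with
    | x :: y :: t, _ => exact ⟨x, y, t, rfl⟩
  rw [indexSplits, sum_image fun I _ J _ h => congrArg Prod.fst h]
  rfl

theorem tb_two (n : ℕ) (a b : A) : tb f (n + 2) [a, b] = f a b := by
  rw [tb_succ f _ (by simp), List.length_cons, List.length_singleton, indexSplits_two]
  simp only [sum_singleton, entriesAt_singleton, tb_succ_singleton, List.getD_cons_zero,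
    List.getD_cons_succ]

theorem tb_three (n : ℕ) (a b c : A) :
    tb f (n + 3) [a, b, c] = f a (f b c) + f (f a b) c + f (f a c) b := by
  rw [tb_succ f _ (by simp), List.length_cons, List.length_cons, List.length_singleton,
    indexSplits_three]
  simp (disch := decide) only [sum_insert, sum_singleton, entriesAt_insert, entriesAt_singleton,
    tb_succ_singleton, tb_two, List.getD_cons_zero, List.getD_cons_succ, add_assoc]

theorem tb_four (n : ℕ) (a b c d : A) :
    tb f (n + 4) [a, b, c, d] =
      f a (tb f (n + 3) [b, c, d]) + f (f a b) (f c d) + f (f a c) (f b d) + f (f a d) (f b c) +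
        f (tb f (n + 3) [a, b, c]) d + f (tb f (n + 3) [a, b, d]) c +
          f (tb f (n + 3) [a, c, d]) b := by
  rw [tb_succ f _ (by simp), List.length_cons, List.length_cons, List.length_cons,
    List.length_singleton, indexSplits_four]
  simp (disch := decide) only [sum_insert, sum_singleton, entriesAt_insert, entriesAt_singleton,
    tb_succ_singleton, tb_two, List.getD_cons_zero, List.getD_cons_succ, add_assoc]

theorem tb_eq_zero_of_three_le_length (zero_left : ∀ x, f 0 x = 0) (zero_right : ∀ x, f x 0 = 0)
    (h3 : ∀ n (l : List A), l.length = 3 → tb f (n + 3) l = 0)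
    (h4 : ∀ n (l : List A), l.length = 4 → tb f (n + 4) l = 0) :
    ∀ m (l : List A), 3 ≤ l.length → l.length ≤ m → tb f m l = 0 := by
  intro m
  induction m with
  | zero => intro l hl hlm; omega
  | succ m ih =>
    intro l hl hlm
    obtain hl3 | hl4 | hl5 : l.length = 3 ∨ l.length = 4 ∨ 5 ≤ l.length := by omega
    · obtain ⟨n, hn⟩ := Nat.exists_eq_add_of_le' (hl3 ▸ hlm)
      rw [hn]
      exact h3 n l hl3
    · obtain ⟨n, hn⟩ := Nat.exists_eq_add_of_le' (hl4 ▸ hlm)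
      rw [hn]
      exact h4 n l hl4
    · rw [tb_succ f m (by omega)]
      refine sum_eq_zero fun p hp => ?_
      obtain ⟨h1, h2, hsum⟩ := cards_of_mem_indexSplits hp
      have hlen1 := length_entriesAt l p.1
      have hlen2 := length_entriesAt l p.2
      obtain hbig1 | hsmall1 := le_or_gt 3 p.1.card
      · rw [ih (entriesAt l p.1) (by omega) (by omega), zero_left]
      · rw [ih (entriesAt l p.2) (by omega) (by omega), zero_right]

end Expansion

section CommutativeAlgebra

variable {A : Type*} [NonUnitalNonAssocRing A]

theorem two_nsmul_matchings_eq_zero (hcomm : ∀ a b : A, a * b = b * a)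
    (h3 : ∀ a b c : A, a * b * c + a * c * b + a * (b * c) = 0) (a b c d : A) :
    2 • (a * b * (c * d) + a * c * (b * d) + a * d * (b * c)) = 0 := by
  have mul_right (x y z w : A) : x * y * z * w + x * z * y * w + x * (y * z) * w = 0 := by
    rw [← add_mul, ← add_mul, h3, zero_mul]
  have mul_left : a * (d * (b * c)) + a * (c * (b * d)) + a * (b * (c * d)) = 0 := by
    rw [← hcomm (b * c) d, ← hcomm (b * d) c, ← mul_add, ← mul_add, h3, mul_zero]
  linear_combination (norm := abel) h3 (a * b) c d + h3 (a * c) b d + h3 (a * d) b c +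
    h3 a b (c * d) + h3 a c (b * d) + h3 a d (b * c) -
    mul_right a c d b - mul_right a b d c - mul_right a b c d - mul_left

theorem matchings_eq_zero [Module ℚ A] (hcomm : ∀ a b : A, a * b = b * a)
    (h3 : ∀ a b c : A, a * b * c + a * c * b + a * (b * c) = 0) (a b c d : A) :
    a * b * (c * d) + a * c * (b * d) + a * d * (b * c) = 0 :=
  have := IsAddTorsionFree.of_module_rat A
  two_nsmul_eq_zero.mp (two_nsmul_matchings_eq_zero hcomm h3 a b c d)

end CommutativeAlgebra

theorem weakly_nil_three_of_t3_general {A : Type*} [NonUnitalNonAssocRing A]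
    [Module ℚ A]
    (hcomm : ∀ a b : A, a * b = b * a)
    (h3 : ∀ a b c : A, (a * b) * c + (a * c) * b + a * (b * c) = 0) :
    ∀ d, 3 ≤ d → ∀ l : List A, l.length = d → Tb (· * ·) l = 0 := by
  have t3_eq_zero : ∀ n (l : List A), l.length = 3 → tb (· * ·) (n + 3) l = 0 := by
    intro n l hl
    obtain ⟨a, b, c, rfl⟩ := List.length_eq_three.mp hl
    rw [tb_three, ← h3 a b c]
    abel
  have t4_eq_zero : ∀ n (l : List A), l.length = 4 → tb (· * ·) (n + 4) l = 0 := by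
    intro n l hl
    obtain ⟨a, b, c, d, rfl⟩ := List.length_eq_four.mp hl
    simp only [tb_four, fun a b c : A => t3_eq_zero n [a, b, c] rfl, mul_zero, zero_mul, add_zero,
      zero_add]
    exact matchings_eq_zero hcomm h3 a b c d
  rintro d hd l rfl
  exact tb_eq_zero_of_three_le_length _ zero_mul mul_zero t3_eq_zero t4_eq_zero _ l hd le_rfl

/-- If a commutative (nonassociative) algebra over `ℚ` satisfies the identity
`t₃(a₁,a₂,a₃) = (a₁a₂)a₃ + (a₁a₃)a₂ + a₁(a₂a₃) = 0`, then it also satisfies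
`t₄ = 0`, and hence `t_d = 0` for all `d ≥ 3`. -/
theorem weakly_nil_three_of_t3 {A : Type*} [NonUnitalNonAssocRing A]
    [Module ℚ A] [SMulCommClass ℚ A A] [IsScalarTower ℚ A A]
    (hcomm : ∀ a b : A, a * b = b * a)
    (h3 : ∀ a b c : A, (a * b) * c + (a * c) * b + a * (b * c) = 0) :
    ∀ d, 3 ≤ d → ∀ l : List A, l.length = d → Tb (· * ·) l = 0 :=
  weakly_nil_three_of_t3_general hcomm h3
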